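/- arXiv:2504.20455 — 5 statements merged into one kernel-verified Lean document; each statement's English description precedes it below -/
import Mathlib

section
/- The Higman group H = ⟨a_1,a_2,a_3,a_4 | a_2^{-1}a_1a_2 = a_1^2, a_3^{-1}a_2a_3 = a_2^2, a_4^{-1}a_3a_4 = a_3^2, a_1^{-1}a_4a_1 = a_4^2⟩ has no nontrivial finite quotients: every homomorphism from H to a finite group is trivial. -/
private lemma higman_conj_iter {F : Type*} [Group F] (x y : F) (h : y⁻¹ * x * y = x ^ 2) :
    ∀ k : ℕ, y⁻¹ ^ k * x * y ^ k = x ^ 2 ^ k := by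
  intro k
  induction k with
  | zero => simp
  | succ k ih =>
    have e1 : y⁻¹ ^ (k + 1) * x * y ^ (k + 1) = y⁻¹ * (y⁻¹ ^ k * x * y ^ k) * y := by
      group
    have e2 : y⁻¹ * x ^ 2 ^ k * y = (y⁻¹ * x * y) ^ 2 ^ k := by
      have := conj_pow (i := 2 ^ k) (a := y⁻¹) (b := x)
      simpa using this.symm
    rw [e1, ih, e2, h, ← pow_mul, pow_succ, mul_comm]

private lemma higman_order_dvd {F : Type*} [Group F] [Finite F] (x y : F)
    (h : y⁻¹ * x * y = x ^ 2) : orderOf x ∣ 2 ^ orderOf y - 1 := by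
  have hk := higman_conj_iter x y h (orderOf y)
  rw [pow_orderOf_eq_one y, inv_pow, pow_orderOf_eq_one y] at hk
  simp only [inv_one, one_mul, mul_one] at hk
  apply orderOf_dvd_of_pow_eq_one
  have h1 : (1 : ℕ) ≤ 2 ^ orderOf y := Nat.one_le_two_pow
  have : x ^ (2 ^ orderOf y - 1) * x = x := by
    rw [← pow_succ, Nat.sub_add_cancel h1, ← hk]
  exact mul_right_cancel (by rw [this, one_mul])

/-- the minimal prime contradiction -/
private lemma higman_contra (N m : ℕ) (hN : N ≠ 1) (hm0 : 0 < m) (hmN : m ∣ N)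
    (hp : N.minFac ∣ 2 ^ m - 1) : False := by
  set p := N.minFac with hpdef
  have pp : p.Prime := Nat.minFac_prime hN
  haveI := Fact.mk pp
  -- p is odd
  have hodd : Odd (2 ^ m - 1) := by
    refine Nat.Even.sub_odd Nat.one_le_two_pow ?_ odd_one
    exact (Nat.even_pow' (by omega)).mpr even_two
  have hp2 : p ≠ 2 := by
    intro h2
    rw [h2] at hp
    rw [Nat.odd_iff] at hodd
    omega
  -- 2 ^ m = 1 in ZMod p
  have h2m : (2 : ZMod p) ^ m = 1 := by
    have : ((2 ^ m - 1 : ℕ) : ZMod p) = 0 := (ZMod.natCast_eq_zero_iff _ _).mpr hp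
    have h1 : (1 : ℕ) ≤ 2 ^ m := Nat.one_le_two_pow
    rw [Nat.cast_sub h1] at this
    push_cast at this
    linear_combination this
  have h2ne : (2 : ZMod p) ≠ 0 := by
    have : ((2 : ℕ) : ZMod p) ≠ 0 := by
      rw [Ne, ZMod.natCast_eq_zero_iff]
      intro h2
      rcases (Nat.prime_dvd_prime_iff_eq pp Nat.prime_two).mp h2 with h
      exact hp2 h
    simpa using this
  set d := orderOf (2 : ZMod p) with hddef
  have hdm : d ∣ m := orderOf_dvd_of_pow_eq_one h2m
  have hdp : d ∣ p - 1 := orderOf_dvd_of_pow_eq_one (ZMod.pow_card_sub_one_eq_one h2ne)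
  have hd1 : d ≠ 1 := by
    intro h1
    have : (2 : ZMod p) = 1 := orderOf_eq_one_iff.mp h1
    have : (1 : ZMod p) = 0 := by linear_combination this
    exact one_ne_zero this
  have hd0 : d ≠ 0 := by
    have : 0 < d := by
      have : p - 1 ≠ 0 := by have := pp.two_le; omega
      rcases Nat.eq_zero_or_pos d with h | h
      · rw [h] at hdp; simp at hdp; omega
      · exact h
    omega
  have hd2 : 2 ≤ d := by omega
  have hq : d.minFac ∣ N := (d.minFac_dvd.trans hdm).trans hmN
  have hple : p ≤ d.minFac := Nat.minFac_le_of_dvd (Nat.minFac_prime hd1).two_le hq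
  have hqd : d.minFac ≤ d := Nat.minFac_le (by omega)
  have hdp1 : d ≤ p - 1 := Nat.le_of_dvd (by have := pp.two_le; omega) hdp
  omega

/-- The relators of the Higman group
`H = ⟨a₁,a₂,a₃,a₄ ∣ a₂⁻¹a₁a₂ = a₁², a₃⁻¹a₂a₃ = a₂², a₄⁻¹a₃a₄ = a₃², a₁⁻¹a₄a₁ = a₄²⟩`,
with `aᵢ` the generator `i - 1 : Fin 4`. -/
def higmanRels : Set (FreeGroup (Fin 4)) :=
  { (FreeGroup.of 1)⁻¹ * FreeGroup.of 0 * FreeGroup.of 1 * ((FreeGroup.of 0) ^ 2)⁻¹,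
    (FreeGroup.of 2)⁻¹ * FreeGroup.of 1 * FreeGroup.of 2 * ((FreeGroup.of 1) ^ 2)⁻¹,
    (FreeGroup.of 3)⁻¹ * FreeGroup.of 2 * FreeGroup.of 3 * ((FreeGroup.of 2) ^ 2)⁻¹,
    (FreeGroup.of 0)⁻¹ * FreeGroup.of 3 * FreeGroup.of 0 * ((FreeGroup.of 3) ^ 2)⁻¹ }

/-- The Higman group. -/
abbrev HigmanGroup : Type := PresentedGroup higmanRels

/-- The Higman group has no nontrivial finite quotients: every homomorphism to a finite
group is trivial. -/
theorem higman_no_finite_quotients (F : Type) [Group F] [Finite F]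
    (f : HigmanGroup →* F) : ∀ h : HigmanGroup, f h = 1 := by
  set g : FreeGroup (Fin 4) →* F :=
    f.comp (QuotientGroup.mk' (Subgroup.normalClosure higmanRels)) with hg
  have key : ∀ r ∈ higmanRels, g r = 1 := by
    intro r hr
    have h1 : (QuotientGroup.mk' (Subgroup.normalClosure higmanRels) r : HigmanGroup) = 1 :=
      (QuotientGroup.eq_one_iff r).mpr (Subgroup.subset_normalClosure hr)
    calc g r = f ((QuotientGroup.mk' (Subgroup.normalClosure higmanRels)) r) := rfl
    _ = f 1 := congrArg f h1
    _ = 1 := map_one f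
  set b : Fin 4 → F := fun i => g (FreeGroup.of i) with hb
  have rel : ∀ i j : Fin 4,
      ((FreeGroup.of j)⁻¹ * FreeGroup.of i * FreeGroup.of j * ((FreeGroup.of i) ^ 2)⁻¹)
        ∈ higmanRels → (b j)⁻¹ * b i * b j = (b i) ^ 2 := by
    intro i j hmem
    have h2 := key _ hmem
    simp only [map_mul, map_inv, map_pow] at h2
    exact mul_inv_eq_one.mp h2
  have h01 := rel 0 1 (by simp [higmanRels])
  have h12 := rel 1 2 (by simp [higmanRels])
  have h23 := rel 2 3 (by simp [higmanRels])
  have h30 := rel 3 0 (by simp [higmanRels])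
  have d0 := higman_order_dvd _ _ h01
  have d1 := higman_order_dvd _ _ h12
  have d2 := higman_order_dvd _ _ h23
  have d3 := higman_order_dvd _ _ h30
  set n : Fin 4 → ℕ := fun i => orderOf (b i) with hn
  set N : ℕ := n 0 * n 1 * n 2 * n 3 with hN
  have hNdvd : ∀ i : Fin 4, n i ∣ N := by
    intro i
    fin_cases i
    · exact show n 0 ∣ N from ⟨n 1 * n 2 * n 3, by rw [hN]; ring⟩
    · exact show n 1 ∣ N from ⟨n 0 * n 2 * n 3, by rw [hN]; ring⟩
    · exact show n 2 ∣ N from ⟨n 0 * n 1 * n 3, by rw [hN]; ring⟩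
    · exact show n 3 ∣ N from ⟨n 0 * n 1 * n 2, by rw [hN]; ring⟩
  have hpos : ∀ i : Fin 4, 0 < n i := fun i => orderOf_pos (b i)
  have hN1 : N = 1 := by
    by_contra hNne
    have pp := Nat.minFac_prime hNne
    have hpN : N.minFac ∣ N := Nat.minFac_dvd N
    rw [hN] at hpN
    rcases pp.dvd_mul.mp hpN with h | h3
    · rcases pp.dvd_mul.mp h with h | h2
      · rcases pp.dvd_mul.mp h with h0 | h1
        · exact higman_contra N (n 1) hNne (hpos 1) (hNdvd 1) (h0.trans d0)
        · exact higman_contra N (n 2) hNne (hpos 2) (hNdvd 2) (h1.trans d1)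
      · exact higman_contra N (n 3) hNne (hpos 3) (hNdvd 3) (h2.trans d2)
    · exact higman_contra N (n 0) hNne (hpos 0) (hNdvd 0) (h3.trans d3)
  have hb1 : ∀ i : Fin 4, b i = 1 := by
    intro i
    have : n i = 1 := Nat.dvd_one.mp (hN1 ▸ hNdvd i)
    exact orderOf_eq_one_iff.mp this
  have hgone : g = 1 := FreeGroup.ext_hom g 1 (fun i => by
    show b i = 1
    exact hb1 i)
  intro h
  obtain ⟨w, rfl⟩ := QuotientGroup.mk'_surjective (Subgroup.normalClosure higmanRels) h
  show g w = 1
  rw [hgone]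
  rfl
end

section
/- Let G = H *_{a_1 = t} BS(2,3) be the amalgamated free product of the Higman group H and BS(2,3) = ⟨b,t | t^{-1}b^2t = b^3⟩ identifying a_1 with t. Then every homomorphism from G to a finite group is trivial, i.e., the profinite completion of G is trivial. -/
/-- Relators of `G = H *_{a₁ = t} BS(2,3)
  = ⟨a₁,a₂,a₃,a₄,b ∣ (Higman relations), a₁⁻¹ b² a₁ = b³⟩`,
with `aᵢ` the generator `i - 1 : Fin 5` and `b` the generator `4`. -/
def amalgamRels : Set (FreeGroup (Fin 5)) :=
  { (FreeGroup.of 1)⁻¹ * FreeGroup.of 0 * FreeGroup.of 1 * ((FreeGroup.of 0) ^ 2)⁻¹,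
    (FreeGroup.of 2)⁻¹ * FreeGroup.of 1 * FreeGroup.of 2 * ((FreeGroup.of 1) ^ 2)⁻¹,
    (FreeGroup.of 3)⁻¹ * FreeGroup.of 2 * FreeGroup.of 3 * ((FreeGroup.of 2) ^ 2)⁻¹,
    (FreeGroup.of 0)⁻¹ * FreeGroup.of 3 * FreeGroup.of 0 * ((FreeGroup.of 3) ^ 2)⁻¹,
    (FreeGroup.of 0)⁻¹ * (FreeGroup.of 4) ^ 2 * FreeGroup.of 0 * ((FreeGroup.of 4) ^ 3)⁻¹ }

/-- The amalgamated product `G = H *_{a₁ = t} BS(2,3)` of the Higman group with `BS(2,3)`. -/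
abbrev AmalgamGroup : Type := PresentedGroup amalgamRels

/-- If a prime `p` divides `k` with `k ∣ 2^m - 1`, then `m` has a prime factor smaller
than `p` (namely a prime factor of the multiplicative order of `2` mod `p`). -/
lemma step_lemma {p k m : ℕ} (hp : p.Prime) (hpk : p ∣ k) (hk : k ∣ 2 ^ m - 1)
    (hm : 0 < m) : ∃ q, q.Prime ∧ q < p ∧ q ∣ m := by
  have hpd : p ∣ 2 ^ m - 1 := hpk.trans hk
  have h2m : 2 ≤ 2 ^ m := by
    calc 2 = 2 ^ 1 := (pow_one 2).symm
    _ ≤ 2 ^ m := Nat.pow_le_pow_right (by norm_num) hm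
  -- p is odd
  have hodd : p ≠ 2 := by
    rintro rfl
    have h2 : 2 ∣ 2 ^ m := dvd_pow_self 2 hm.ne'
    omega
  have hp2 : 2 < p := lt_of_le_of_ne hp.two_le (Ne.symm hodd)
  haveI : Fact p.Prime := ⟨hp⟩
  have hcast : ((2 ^ m - 1 : ℕ) : ZMod p) = 0 :=
    (ZMod.natCast_eq_zero_iff _ _).mpr hpd
  have h1 : (2 : ZMod p) ^ m = 1 := by
    have he : (2 : ℕ) ^ m = (2 ^ m - 1) + 1 := by omega
    have : ((2 ^ m : ℕ) : ZMod p) = ((2 ^ m - 1 : ℕ) : ZMod p) + 1 := by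
      rw [he]; push_cast; ring
    rw [hcast, zero_add] at this
    push_cast at this
    exact this
  set d := orderOf (2 : ZMod p) with hd
  have hdm : d ∣ m := orderOf_dvd_of_pow_eq_one h1
  have h2ne : (2 : ZMod p) ≠ 0 := by
    intro h
    have h2 : ((2 : ℕ) : ZMod p) = 0 := by exact_mod_cast h
    have := (ZMod.natCast_eq_zero_iff 2 p).mp h2
    have := Nat.le_of_dvd (by norm_num) this
    omega
  have hdp : d ∣ p - 1 := orderOf_dvd_of_pow_eq_one (ZMod.pow_card_sub_one_eq_one h2ne)
  have hd1 : d ≠ 1 := by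
    intro h
    have h21 : (2 : ZMod p) = 1 := orderOf_eq_one_iff.mp h
    have : ((1 : ℕ) : ZMod p) = 0 := by
      have : (2 : ZMod p) - 1 = 0 := sub_eq_zero.mpr h21
      push_cast
      linear_combination this
    have := (ZMod.natCast_eq_zero_iff 1 p).mp this
    have := Nat.le_of_dvd one_pos this
    omega
  have hdpos : 0 < d := Nat.pos_of_dvd_of_pos hdm hm
  refine ⟨d.minFac, Nat.minFac_prime hd1, ?_, (Nat.minFac_dvd d).trans hdm⟩
  have h3 : d.minFac ≤ d := Nat.minFac_le hdpos
  have h4 : d ≤ p - 1 := Nat.le_of_dvd (by omega) hdp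
  omega

/-- Higman's argument: four positive integers in a cyclic chain of divisibilities
`kᵢ ∣ 2^{k_{i+1}} - 1` must all equal `1`. -/
lemma higman_orders {k0 k1 k2 k3 : ℕ} (h0 : 0 < k0) (h1 : 0 < k1) (h2 : 0 < k2)
    (h3 : 0 < k3) (d0 : k0 ∣ 2 ^ k1 - 1) (d1 : k1 ∣ 2 ^ k2 - 1)
    (d2 : k2 ∣ 2 ^ k3 - 1) (d3 : k3 ∣ 2 ^ k0 - 1) :
    k0 = 1 ∧ k1 = 1 ∧ k2 = 1 ∧ k3 = 1 := by
  have H : ∀ p, p.Prime → ¬(p ∣ k0 ∨ p ∣ k1 ∨ p ∣ k2 ∨ p ∣ k3) := by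
    intro p
    induction p using Nat.strong_induction_on with
    | _ p IH =>
      intro hp hd
      rcases hd with h | h | h | h
      · obtain ⟨q, hq, hqp, hqm⟩ := step_lemma hp h d0 h1
        exact IH q hqp hq (Or.inr (Or.inl hqm))
      · obtain ⟨q, hq, hqp, hqm⟩ := step_lemma hp h d1 h2
        exact IH q hqp hq (Or.inr (Or.inr (Or.inl hqm)))
      · obtain ⟨q, hq, hqp, hqm⟩ := step_lemma hp h d2 h3
        exact IH q hqp hq (Or.inr (Or.inr (Or.inr hqm)))
      · obtain ⟨q, hq, hqp, hqm⟩ := step_lemma hp h d3 h0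
        exact IH q hqp hq (Or.inl hqm)
  have e : ∀ k : ℕ, 0 < k → (∀ p, p.Prime → ¬ p ∣ k) → k = 1 := by
    intro k hk hnp
    by_contra hne
    exact hnp k.minFac (Nat.minFac_prime (by omega)) (Nat.minFac_dvd k)
  exact ⟨e k0 h0 fun p hp hd => H p hp (Or.inl hd),
    e k1 h1 fun p hp hd => H p hp (Or.inr (Or.inl hd)),
    e k2 h2 fun p hp hd => H p hp (Or.inr (Or.inr (Or.inl hd))),
    e k3 h3 fun p hp hd => H p hp (Or.inr (Or.inr (Or.inr hd)))⟩

/-- If `y⁻¹ x y = x²` in a finite group, then `orderOf x ∣ 2^(orderOf y) - 1`. -/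
lemma order_dvd_of_conj {F : Type} [Group F] [Finite F] {x y : F}
    (h : y⁻¹ * x * y = x ^ 2) : orderOf x ∣ 2 ^ orderOf y - 1 := by
  have key : ∀ n : ℕ, (y ^ n)⁻¹ * x * y ^ n = x ^ (2 ^ n) := by
    intro n
    induction n with
    | zero => simp
    | succ n ih =>
      have : (y ^ (n + 1))⁻¹ * x * y ^ (n + 1)
          = y⁻¹ * ((y ^ n)⁻¹ * x * y ^ n) * y := by
        rw [pow_succ]; group
      rw [this, ih]
      have : y⁻¹ * x ^ 2 ^ n * y = (y⁻¹ * x * y) ^ 2 ^ n := by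
        simpa using (conj_pow (a := y⁻¹) (b := x) (i := 2 ^ n)).symm
      rw [this, h, ← pow_mul, pow_succ, Nat.mul_comm]
  have hn := key (orderOf y)
  rw [pow_orderOf_eq_one y] at hn
  simp only [inv_one, one_mul, mul_one] at hn
  have h1 : 1 ≤ 2 ^ orderOf y := Nat.one_le_two_pow
  apply orderOf_dvd_of_pow_eq_one
  have : x ^ (2 ^ orderOf y - 1) * x = x ^ (2 ^ orderOf y) := by
    rw [← pow_succ]; congr 1; omega
  rw [← hn] at this
  exact mul_right_cancel (by rw [this, one_mul])

/-- Every homomorphism from `G = H *_{a₁ = t} BS(2,3)` to a finite group is trivial,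
i.e. the profinite completion of `G` is trivial. -/
theorem amalgam_no_finite_quotients (F : Type) [Group F] [Finite F]
    (f : AmalgamGroup →* F) : ∀ g : AmalgamGroup, f g = 1 := by
  set φ : FreeGroup (Fin 5) →* AmalgamGroup :=
    QuotientGroup.mk' (Subgroup.normalClosure amalgamRels) with hφ
  set ψ : FreeGroup (Fin 5) →* F := f.comp φ with hψ
  have hrel : ∀ r ∈ amalgamRels, ψ r = 1 := by
    intro r hr
    have : φ r = 1 := (QuotientGroup.eq_one_iff r).mpr (Subgroup.subset_normalClosure hr)
    simp [hψ, MonoidHom.comp_apply, this]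
  set x : Fin 5 → F := fun i => ψ (FreeGroup.of i) with hx
  have conj : ∀ i j : Fin 5,
      ((FreeGroup.of j)⁻¹ * FreeGroup.of i * FreeGroup.of j * ((FreeGroup.of i) ^ 2)⁻¹
        ∈ amalgamRels) → (x j)⁻¹ * x i * x j = (x i) ^ 2 := by
    intro i j hmem
    have := hrel _ hmem
    simp only [map_mul, map_inv, map_pow, hx] at this ⊢
    rw [mul_inv_eq_one] at this
    exact this
  have r0 : (x 1)⁻¹ * x 0 * x 1 = (x 0) ^ 2 := conj 0 1 (by left; rfl)
  have r1 : (x 2)⁻¹ * x 1 * x 2 = (x 1) ^ 2 := conj 1 2 (by right; left; rfl)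
  have r2 : (x 3)⁻¹ * x 2 * x 3 = (x 2) ^ 2 := conj 2 3 (by right; right; left; rfl)
  have r3 : (x 0)⁻¹ * x 3 * x 0 = (x 3) ^ 2 := conj 3 0 (by right; right; right; left; rfl)
  have hk := higman_orders (orderOf_pos (x 0)) (orderOf_pos (x 1)) (orderOf_pos (x 2))
    (orderOf_pos (x 3)) (order_dvd_of_conj r0) (order_dvd_of_conj r1)
    (order_dvd_of_conj r2) (order_dvd_of_conj r3)
  have e0 : x 0 = 1 := orderOf_eq_one_iff.mp hk.1
  have e1 : x 1 = 1 := orderOf_eq_one_iff.mp hk.2.1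
  have e2 : x 2 = 1 := orderOf_eq_one_iff.mp hk.2.2.1
  have e3 : x 3 = 1 := orderOf_eq_one_iff.mp hk.2.2.2
  have e4 : x 4 = 1 := by
    have hmem : (FreeGroup.of 0)⁻¹ * (FreeGroup.of 4 : FreeGroup (Fin 5)) ^ 2 *
        FreeGroup.of 0 * ((FreeGroup.of 4) ^ 3)⁻¹ ∈ amalgamRels := by
      right; right; right; right; rfl
    have := hrel _ hmem
    simp only [map_mul, map_inv, map_pow] at this
    rw [show ψ (FreeGroup.of 0) = x 0 from rfl, show ψ (FreeGroup.of 4) = x 4 from rfl,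
      e0] at this
    have h23 : (x 4) ^ 2 = (x 4) ^ 3 := by
      rw [mul_inv_eq_one] at this
      simpa using this
    have : (x 4) ^ 2 * 1 = (x 4) ^ 2 * x 4 := by
      rw [mul_one, ← pow_succ]; exact h23
    exact (mul_left_cancel this).symm
  intro g
  obtain ⟨w, rfl⟩ := QuotientGroup.mk'_surjective (Subgroup.normalClosure amalgamRels) g
  have hψ1 : ψ = 1 := by
    apply FreeGroup.ext_hom
    intro a
    fin_cases a
    · exact e0
    · exact e1
    · exact e2
    · exact e3
    · exact e4
  calc f (QuotientGroup.mk' _ w) = ψ w := rfl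
  _ = 1 := by rw [hψ1]; rfl
end

section
/- Let G be a group generated by n elements and let π_1 : F_n * G → G be the epimorphism that is the identity on G and maps the free factor F_n to G via a fixed surjection π_2 : F_n → G sending the free generator s_i to a generator \tilde{s_i} of G. Then the kernel of π_1 is a free group, freely generated by the set { g s_i \tilde{s_i}^{-1} g^{-1} : g ∈ G, 1 ≤ i ≤ n }. -/
open Monoid

/-- The map `π₂ : Fₙ → G` sending the free generator `sᵢ` to the generator `ts i` of `G`. -/
def piTwo {G : Type*} [Group G] {n : ℕ} (ts : Fin n → G) : FreeGroup (Fin n) →* G :=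
  FreeGroup.lift ts

/-- The map `π₁ : Fₙ * G → G` with `π₁|_{Fₙ} = π₂` and `π₁|_G = id`. -/
def piOne {G : Type*} [Group G] {n : ℕ} (ts : Fin n → G) : Coprod (FreeGroup (Fin n)) G →* G :=
  Coprod.lift (piTwo ts) (MonoidHom.id G)

/-- The element `x_{g,i} = g sᵢ (ts i)⁻¹ g⁻¹` of the free product `Fₙ * G`. -/
def xgen {G : Type*} [Group G] {n : ℕ} (ts : Fin n → G) (g : G) (i : Fin n) :
    Coprod (FreeGroup (Fin n)) G :=
  Coprod.inr g * Coprod.inl (FreeGroup.of i) * Coprod.inr (ts i)⁻¹ * Coprod.inr g⁻¹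

section Aux

variable {G : Type*} [Group G] {n : ℕ} (ts : Fin n → G)

/-- The action of `G` on `FreeGroup (G × Fin n)` by left multiplication on the first factor. -/
def kact : G →* MulAut (FreeGroup (G × Fin n)) where
  toFun g := FreeGroup.freeGroupCongr (Equiv.prodCongr (Equiv.mulLeft g) (Equiv.refl (Fin n)))
  map_one' := by
    apply MulEquiv.toMonoidHom_injective
    apply FreeGroup.ext_hom
    rintro ⟨h, i⟩
    simp
  map_mul' g₁ g₂ := by
    apply MulEquiv.toMonoidHom_injective
    apply FreeGroup.ext_hom
    rintro ⟨h, i⟩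
    simp [mul_assoc]

@[simp] lemma kact_of (g h : G) (i : Fin n) :
    kact (n := n) g (FreeGroup.of (h, i)) = FreeGroup.of (g * h, i) := rfl

/-- The map `FreeGroup (G × Fin n) →* Fₙ * G` sending `(g, i)` to `xgen ts g i`. -/
def phi : FreeGroup (G × Fin n) →* Coprod (FreeGroup (Fin n)) G :=
  FreeGroup.lift fun p => xgen ts p.1 p.2

@[simp] lemma phi_of (g : G) (i : Fin n) : phi ts (FreeGroup.of (g, i)) = xgen ts g i :=
  FreeGroup.lift_apply_of

/-- The map `Fₙ * G →* FreeGroup (G × Fin n) ⋊ G`. -/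
def theta : Coprod (FreeGroup (Fin n)) G →* SemidirectProduct (FreeGroup (G × Fin n)) G kact :=
  Coprod.lift
    (FreeGroup.lift fun i =>
      SemidirectProduct.inl (FreeGroup.of ((1 : G), i)) * SemidirectProduct.inr (ts i))
    SemidirectProduct.inr

lemma psi_cond (g : G) :
    (phi ts).comp (kact (n := n) g).toMonoidHom =
      (MulAut.conj (Coprod.inr g)).toMonoidHom.comp (phi ts) := by
  apply FreeGroup.ext_hom
  rintro ⟨h, i⟩
  simp [xgen, MulAut.conj, mul_assoc]

/-- The map `FreeGroup (G × Fin n) ⋊ G →* Fₙ * G`. -/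
def psi : SemidirectProduct (FreeGroup (G × Fin n)) G kact →* Coprod (FreeGroup (Fin n)) G :=
  SemidirectProduct.lift (phi ts) Coprod.inr (psi_cond ts)

lemma theta_comp_psi : (theta ts).comp (psi ts) = MonoidHom.id _ := by
  apply SemidirectProduct.hom_ext
  · apply FreeGroup.ext_hom
    rintro ⟨g, i⟩
    simp only [MonoidHom.comp_apply, MonoidHom.id_apply, SemidirectProduct.lift_inl, psi,
      phi_of]
    rw [xgen]
    simp only [map_mul, map_inv, theta, Coprod.lift_apply_inl, Coprod.lift_apply_inr,
      FreeGroup.lift_apply_of]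
    rw [show (SemidirectProduct.inr g : SemidirectProduct (FreeGroup (G × Fin n)) G kact) *
        (SemidirectProduct.inl (FreeGroup.of ((1 : G), i)) * SemidirectProduct.inr (ts i)) *
        (SemidirectProduct.inr (ts i))⁻¹ * (SemidirectProduct.inr g)⁻¹ =
        SemidirectProduct.inr g * SemidirectProduct.inl (FreeGroup.of ((1 : G), i)) *
        (SemidirectProduct.inr g)⁻¹ by group]
    rw [← map_inv, ← SemidirectProduct.inl_aut, kact_of, mul_one]
  · apply MonoidHom.ext
    intro g
    simp [psi, theta]

lemma psi_comp_theta : (psi ts).comp (theta ts) = MonoidHom.id _ := by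
  apply Coprod.hom_ext
  · apply FreeGroup.ext_hom
    intro i
    simp only [MonoidHom.comp_apply, MonoidHom.id_apply, theta, Coprod.lift_apply_inl,
      FreeGroup.lift_apply_of, map_mul, psi, SemidirectProduct.lift_inl, SemidirectProduct.lift_inr,
      phi_of, xgen]
    simp [mul_assoc]
  · apply MonoidHom.ext
    intro g
    simp [psi, theta]

lemma rightHom_comp_theta :
    SemidirectProduct.rightHom.comp (theta ts) = piOne ts := by
  apply Coprod.hom_ext
  · apply FreeGroup.ext_hom
    intro i
    simp [theta, piOne, piTwo]
  · apply MonoidHom.ext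
    intro g
    simp [theta, piOne]

end Aux

/-- The kernel of `π₁ : Fₙ * G → G` is a free group, freely generated by
`{ g sᵢ (ts i)⁻¹ g⁻¹ : g ∈ G, 1 ≤ i ≤ n }`. -/
theorem ker_piOne_free {G : Type*} [Group G] {n : ℕ} (ts : Fin n → G)
    (hgen : Subgroup.closure (Set.range ts) = ⊤) :
    ∃ e : FreeGroup (G × Fin n) ≃* (piOne ts).ker,
      ∀ (g : G) (i : Fin n),
        ((e (FreeGroup.of (g, i)) : (piOne ts).ker) : Coprod (FreeGroup (Fin n)) G) =
          xgen ts g i := by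
  have hmem : ∀ w : FreeGroup (G × Fin n), phi ts w ∈ (piOne ts).ker := by
    intro w
    rw [MonoidHom.mem_ker, ← rightHom_comp_theta ts, MonoidHom.comp_apply]
    have : theta ts (phi ts w) = SemidirectProduct.inl w := by
      have := congrArg (fun f => f (SemidirectProduct.inl w)) (theta_comp_psi ts)
      simpa [psi] using this
    rw [this]
    simp
  let φ' : FreeGroup (G × Fin n) →* (piOne ts).ker := (phi ts).codRestrict _ hmem
  have hbij : Function.Bijective φ' := by
    constructor
    · intro a b hab
      have hab' : phi ts a = phi ts b := congrArg Subtype.val hab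
      have ha : theta ts (phi ts a) = SemidirectProduct.inl a := by
        have := congrArg (fun f => f (SemidirectProduct.inl a)) (theta_comp_psi ts)
        simpa [psi] using this
      have hb : theta ts (phi ts b) = SemidirectProduct.inl b := by
        have := congrArg (fun f => f (SemidirectProduct.inl b)) (theta_comp_psi ts)
        simpa [psi] using this
      have : SemidirectProduct.inl (φ := kact) a = SemidirectProduct.inl b := by
        rw [← ha, ← hb, hab']
      exact SemidirectProduct.inl_injective this
    · rintro ⟨k, hk⟩
      rw [MonoidHom.mem_ker] at hk
      refine ⟨(theta ts k).left, ?_⟩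
      have hright : (theta ts k).right = 1 := by
        have := congrArg (fun f => f k) (rightHom_comp_theta ts)
        simpa [SemidirectProduct.rightHom, hk] using this
      have hinl : SemidirectProduct.inl (φ := kact) (theta ts k).left = theta ts k := by
        conv_rhs => rw [← SemidirectProduct.inl_left_mul_inr_right (theta ts k)]
        rw [hright]
        simp
      apply Subtype.ext
      show phi ts (theta ts k).left = k
      have h1 : psi ts (SemidirectProduct.inl (φ := kact) (theta ts k).left) =
          phi ts (theta ts k).left := by simp [psi]
      have h2 : psi ts (theta ts k) = k := by
        have := congrArg (fun f => f k) (psi_comp_theta ts)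
        simpa using this
      rw [← h1, hinl, h2]
  refine ⟨MulEquiv.ofBijective φ' hbij, fun g i => ?_⟩
  show ((φ' (FreeGroup.of (g, i)) : (piOne ts).ker) : Coprod (FreeGroup (Fin n)) G) = xgen ts g i
  simp [φ']
end

section
/- In the semidirect product P ≅ F_∞ ⋊ F_n with F_n acting by conjugation inside F_n * G, the generator s_i acts on the free generator x_{g,j} = g s_j \tilde{s_j}^{-1} g^{-1} of F_∞ by s_i · x_{g,j} = x_{1,i} · x_{\tilde{s_i} g, j} · x_{1,i}^{-1}. -/
open Monoid

/-- In `P ≅ F_∞ ⋊ Fₙ` with `Fₙ` acting by conjugation inside `Fₙ * G`, the generator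
`sᵢ` acts on the free generator `x_{g,j}` by `sᵢ · x_{g,j} = x_{1,i} x_{ts i · g, j} x_{1,i}⁻¹`. -/
theorem si_action_on_xgen {G : Type*} [Group G] {n : ℕ} (ts : Fin n → G)
    (i j : Fin n) (g : G) :
    Coprod.inl (FreeGroup.of i) * xgen ts g j * (Coprod.inl (FreeGroup.of i) :
        Coprod (FreeGroup (Fin n)) G)⁻¹ =
      xgen ts 1 i * xgen ts (ts i * g) j * (xgen ts 1 i)⁻¹ := by
  simp only [xgen, map_one, mul_one, one_mul, mul_inv_rev, map_inv, map_mul, inv_inv]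
  group
end

section
/- The Magnus map from the free group F on a set X into the multiplicative group of units of the ring of formal power series in non-commuting variables {X_x : x ∈ X} over ℤ, defined by x ↦ 1 + X_x, is an injective group homomorphism. -/
open Classical in
/-- The ring of formal power series over `ℤ` in non-commuting variables indexed by `X`:
coefficient functions on the free monoid of monomials, with convolution product. -/
def NCSeries (X : Type*) : Type _ := FreeMonoid X → ℤ

namespace NCSeries

variable {X : Type*}

instance : AddCommGroup (NCSeries X) := inferInstanceAs (AddCommGroup (FreeMonoid X → ℤ))

open Classical in
noncomputable instance : One (NCSeries X) := ⟨fun w => if w = 1 then 1 else 0⟩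

instance : Mul (NCSeries X) :=
  ⟨fun f g w => ∑ i ∈ Finset.range ((FreeMonoid.toList w).length + 1),
    f (FreeMonoid.ofList ((FreeMonoid.toList w).take i)) *
      g (FreeMonoid.ofList ((FreeMonoid.toList w).drop i))⟩

theorem mul_apply (f g : NCSeries X) (w : FreeMonoid X) :
    (f * g) w = ∑ i ∈ Finset.range ((FreeMonoid.toList w).length + 1),
      f (FreeMonoid.ofList ((FreeMonoid.toList w).take i)) *
        g (FreeMonoid.ofList ((FreeMonoid.toList w).drop i)) := rfl

open Classical in
theorem one_apply (w : FreeMonoid X) : (1 : NCSeries X) w = if w = 1 then 1 else 0 := rfl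

theorem add_apply (f g : NCSeries X) (w : FreeMonoid X) : (f + g) w = f w + g w := rfl

theorem zero_apply (w : FreeMonoid X) : (0 : NCSeries X) w = 0 := rfl

theorem ofList_eq_one_iff (l : List X) : FreeMonoid.ofList l = 1 ↔ l = [] := by
  constructor
  · intro h; simpa using congrArg FreeMonoid.toList h
  · rintro rfl; rfl

noncomputable instance : Ring (NCSeries X) where
  __ := (inferInstance : AddCommGroup (NCSeries X))
  one_mul f := by
    funext w
    rw [mul_apply, Finset.sum_eq_single 0]
    · simp [one_apply, ofList_eq_one_iff]
    · intro b hb hb0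
      have : ¬ ((FreeMonoid.toList w).take b = []) := by
        rw [List.take_eq_nil_iff]
        rw [Finset.mem_range] at hb
        rintro (rfl | hnil)
        · exact hb0 rfl
        · simp [hnil] at hb; omega
      rw [one_apply, if_neg, zero_mul]
      rw [ofList_eq_one_iff]; exact this
    · intro h0; exact absurd (Finset.mem_range.2 (Nat.succ_pos _)) h0
  mul_one f := by
    funext w
    rw [mul_apply, Finset.sum_eq_single ((FreeMonoid.toList w).length)]
    · simp [one_apply, ofList_eq_one_iff]
    · intro b hb hb'
      rw [Finset.mem_range] at hb
      rw [one_apply, if_neg, mul_zero]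
      rw [ofList_eq_one_iff, List.drop_eq_nil_iff]
      omega
    · intro h0; exact absurd (Finset.mem_range.2 (Nat.lt_succ_self _)) h0
  mul_assoc f g h := by
    funext w
    set l := FreeMonoid.toList w with hl
    have key : ∀ j ∈ Finset.range (l.length + 1),
        (f * g) (FreeMonoid.ofList (l.take j)) * h (FreeMonoid.ofList (l.drop j)) =
        ∑ i ∈ Finset.range (j + 1),
          f (FreeMonoid.ofList (l.take i)) *
            g (FreeMonoid.ofList ((l.drop i).take (j - i))) *
            h (FreeMonoid.ofList (l.drop j)) := by
      intro j hj
      rw [Finset.mem_range] at hj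
      rw [mul_apply, Finset.sum_mul]
      simp only [FreeMonoid.toList_ofList]
      rw [List.length_take, min_eq_left (by omega)]
      refine Finset.sum_congr rfl fun i hi => ?_
      rw [Finset.mem_range] at hi
      rw [List.take_take, min_eq_left (by omega), List.drop_take]
    have key2 : ∀ i ∈ Finset.range (l.length + 1),
        f (FreeMonoid.ofList (l.take i)) * (g * h) (FreeMonoid.ofList (l.drop i)) =
        ∑ k ∈ Finset.range ((l.length - i) + 1),
          f (FreeMonoid.ofList (l.take i)) *
            (g (FreeMonoid.ofList ((l.drop i).take k)) *
              h (FreeMonoid.ofList (l.drop (i + k)))) := by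
      intro i hi
      rw [Finset.mem_range] at hi
      rw [mul_apply, Finset.mul_sum]
      simp only [FreeMonoid.toList_ofList]
      rw [List.length_drop]
      refine Finset.sum_congr rfl fun k hk => ?_
      rw [List.drop_drop]
    show (f * g * h) w = (f * (g * h)) w
    rw [mul_apply, Finset.sum_congr rfl key, Finset.sum_sigma']
    rw [mul_apply, Finset.sum_congr rfl key2, Finset.sum_sigma']
    refine Finset.sum_nbij' (fun p => ⟨p.2, p.1 - p.2⟩) (fun p => ⟨p.1 + p.2, p.1⟩)
      ?_ ?_ ?_ ?_ ?_
    · rintro ⟨j, i⟩ hp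
      simp only [Finset.mem_sigma, Finset.mem_range] at hp ⊢
      omega
    · rintro ⟨i, k⟩ hp
      simp only [Finset.mem_sigma, Finset.mem_range] at hp ⊢
      omega
    · rintro ⟨j, i⟩ hp
      simp only [Finset.mem_sigma, Finset.mem_range] at hp
      simp only [Sigma.mk.inj_iff, heq_eq_eq]
      exact ⟨by omega, trivial⟩
    · rintro ⟨i, k⟩ hp
      simp only [Finset.mem_sigma, Finset.mem_range] at hp
      simp only [Sigma.mk.inj_iff, heq_eq_eq]
      refine ⟨by trivial, by omega⟩
    · rintro ⟨j, i⟩ hp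
      simp only [Finset.mem_sigma, Finset.mem_range] at hp
      have hij : i + (j - i) = j := by omega
      rw [hij, mul_assoc]
  left_distrib f g h := by
    funext w
    simp only [mul_apply, add_apply, mul_add, Finset.sum_add_distrib]
  right_distrib f g h := by
    funext w
    simp only [mul_apply, add_apply, add_mul, Finset.sum_add_distrib]
  zero_mul f := by funext w; simp [mul_apply, zero_apply]
  mul_zero f := by funext w; simp [mul_apply, zero_apply]

open Classical in
/-- The variable `X_x` as a power series. -/
noncomputable def Xvar (x : X) : NCSeries X :=
  fun w => if w = FreeMonoid.of x then 1 else 0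

end NCSeries

/-!
Write a nontrivial element of the free group as a reduced word `x₁ ^ n₁ ⋯ x_k ^ n_k` in the free
product of the infinite cyclic groups `⟨x⟩`, so that `xᵢ ≠ xᵢ₊₁` and `nᵢ ≠ 0`. Its image is the
product of the series `(1 + X_{xᵢ}) ^ nᵢ`, each a series in the single variable `X_{xᵢ}` with
linear coefficient `nᵢ`. No two adjacent letters of the monomial `X_{x₁} ⋯ X_{x_k}` agree, so each
factor contributes at most one of its `k` letters; hence its coefficient in the product is
`n₁ ⋯ n_k ≠ 0`, while its coefficient in `1` is `0`.
-/

open FreeMonoid (ofList toList)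

theorem FreeGroup.equivIntOfUnique_ne_zero {α : Type*} [Unique α] {g : FreeGroup α}
    (hg : g ≠ 1) :
    FreeGroup.equivIntOfUnique g ≠ 0 := by
  intro h
  rw [← FreeGroup.equivIntOfUnique.symm_apply_apply g, h] at hg
  simp [FreeGroup.equivIntOfUnique] at hg

namespace NCSeries

variable {X : Type*}

@[ext]
theorem ext {f g : NCSeries X} (h : ∀ l : List X, f (ofList l) = g (ofList l)) : f = g :=
  funext fun w => h (toList w)

theorem mul_apply_ofList (f g : NCSeries X) (l : List X) :
    (f * g) (ofList l) = ∑ i ∈ Finset.range (l.length + 1),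
      f (ofList (l.take i)) * g (ofList (l.drop i)) :=
  rfl

theorem mul_apply_one (f g : NCSeries X) : (f * g) 1 = f 1 * g 1 := by
  simp [mul_apply]

theorem mul_apply_of (f g : NCSeries X) (x : X) :
    (f * g) (FreeMonoid.of x) = f 1 * g (FreeMonoid.of x) + f (FreeMonoid.of x) * g 1 := by
  simp [mul_apply, Finset.sum_range_succ]

theorem one_apply_one : (1 : NCSeries X) 1 = 1 :=
  if_pos rfl

theorem one_apply_ofList_of_ne_nil {l : List X} (hl : l ≠ []) :
    (1 : NCSeries X) (ofList l) = 0 :=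
  if_neg fun h => hl ((ofList_eq_one_iff l).1 h)

theorem one_apply_of (x : X) : (1 : NCSeries X) (FreeMonoid.of x) = 0 :=
  one_apply_ofList_of_ne_nil (List.cons_ne_nil x [])

theorem Xvar_apply_ofList_of_length_ne_one (x : X) {l : List X} (hl : l.length ≠ 1) :
    Xvar x (ofList l) = 0 :=
  if_neg fun h => hl (by simpa using congrArg (List.length ∘ toList) h)

theorem Xvar_apply_one (x : X) : Xvar x 1 = 0 :=
  Xvar_apply_ofList_of_length_ne_one x (l := []) zero_ne_one

theorem Xvar_apply_of_self (x : X) : Xvar x (FreeMonoid.of x) = 1 :=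
  if_pos rfl

theorem eq_of_Xvar_apply_of_ne_zero {x a : X} (h : Xvar x (FreeMonoid.of a) ≠ 0) : a = x :=
  FreeMonoid.of_injective (of_not_not fun hne => h (if_neg hne))

theorem Xvar_mul_apply_cons (x a : X) (t : List X) (f : NCSeries X) :
    (Xvar x * f) (ofList (a :: t)) = Xvar x (FreeMonoid.of a) * f (ofList t) := by
  rw [mul_apply_ofList, Finset.sum_eq_single 1 _ (by simp)]
  · rfl
  · intro i hi hne
    rw [Xvar_apply_ofList_of_length_ne_one, zero_mul]
    simp only [Finset.mem_range, List.length_cons] at hi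
    simp only [List.length_take, List.length_cons]
    omega

theorem mul_Xvar_apply_concat (x a : X) (t : List X) (f : NCSeries X) :
    (f * Xvar x) (ofList (t ++ [a])) = f (ofList t) * Xvar x (FreeMonoid.of a) := by
  rw [mul_apply_ofList, Finset.sum_eq_single t.length _ (by simp)]
  · rw [List.take_left' rfl, List.drop_left' rfl]
    rfl
  · intro i hi hne
    rw [Xvar_apply_ofList_of_length_ne_one, mul_zero]
    simp only [Finset.mem_range, List.length_append, List.length_singleton] at hi
    simp only [List.length_drop, List.length_append, List.length_singleton]
    omega

/-- The series `∑ₙ (-X_x)ⁿ`: its coefficient at a monomial is the product, over the letters of the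
monomial, of the coefficients of `-X_x`. -/
noncomputable def oneAddXvarInv (x : X) : NCSeries X :=
  fun w => FreeMonoid.lift (fun a => -Xvar x (FreeMonoid.of a)) w

theorem oneAddXvarInv_apply_ofList (x : X) (l : List X) :
    oneAddXvarInv x (ofList l) = (l.map fun a => -Xvar x (FreeMonoid.of a)).prod :=
  FreeMonoid.lift_ofList _ l

theorem oneAddXvarInv_apply_one (x : X) : oneAddXvarInv x 1 = 1 :=
  oneAddXvarInv_apply_ofList x []

theorem oneAddXvarInv_apply_of_self (x : X) : oneAddXvarInv x (FreeMonoid.of x) = -1 := by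
  simp [oneAddXvarInv, Xvar_apply_of_self]

theorem oneAddXvarInv_apply_cons (x a : X) (t : List X) :
    oneAddXvarInv x (ofList (a :: t)) =
      -Xvar x (FreeMonoid.of a) * oneAddXvarInv x (ofList t) := by
  rw [oneAddXvarInv_apply_ofList, oneAddXvarInv_apply_ofList, List.map_cons, List.prod_cons]

theorem oneAddXvarInv_apply_concat (x a : X) (t : List X) :
    oneAddXvarInv x (ofList (t ++ [a])) =
      oneAddXvarInv x (ofList t) * -Xvar x (FreeMonoid.of a) := by
  rw [oneAddXvarInv_apply_ofList, oneAddXvarInv_apply_ofList, List.map_append, List.prod_append,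
    List.map_singleton, List.prod_singleton]

theorem one_add_Xvar_mul_oneAddXvarInv (x : X) : (1 + Xvar x) * oneAddXvarInv x = 1 := by
  ext (_ | ⟨a, t⟩)
  · rw [FreeMonoid.ofList_nil, add_mul, one_mul, add_apply, mul_apply_one, Xvar_apply_one,
      zero_mul, oneAddXvarInv_apply_one, one_apply_one, add_zero]
  · rw [add_mul, one_mul, add_apply, Xvar_mul_apply_cons, oneAddXvarInv_apply_cons,
      one_apply_ofList_of_ne_nil (List.cons_ne_nil a t)]
    ring

theorem oneAddXvarInv_mul_one_add_Xvar (x : X) : oneAddXvarInv x * (1 + Xvar x) = 1 := by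
  ext l
  obtain rfl | ⟨t, a, rfl⟩ := l.eq_nil_or_concat'
  · rw [FreeMonoid.ofList_nil, mul_add, mul_one, add_apply, mul_apply_one, Xvar_apply_one,
      mul_zero, oneAddXvarInv_apply_one, one_apply_one, add_zero]
  · rw [mul_add, mul_one, add_apply, mul_Xvar_apply_concat, oneAddXvarInv_apply_concat,
      one_apply_ofList_of_ne_nil (by simp)]
    ring

noncomputable def magnusUnit (x : X) : (NCSeries X)ˣ :=
  ⟨1 + Xvar x, oneAddXvarInv x, one_add_Xvar_mul_oneAddXvarInv x,
    oneAddXvarInv_mul_one_add_Xvar x⟩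

@[simp]
theorem val_magnusUnit (x : X) : (magnusUnit x : NCSeries X) = 1 + Xvar x :=
  rfl

@[simp]
theorem val_inv_magnusUnit (x : X) : ((magnusUnit x)⁻¹ : (NCSeries X)ˣ) = oneAddXvarInv x :=
  rfl

def supportedOnPowers (x : X) : Submonoid (NCSeries X) where
  carrier := {f | ∀ l : List X, f (ofList l) ≠ 0 → ∀ a ∈ l, a = x}
  one_mem' l hl := by
    obtain rfl : l = [] := of_not_not fun hne => hl (one_apply_ofList_of_ne_nil hne)
    simp
  mul_mem' {f g} hf hg l hl a ha := by
    obtain ⟨i, -, hi⟩ := Finset.exists_ne_zero_of_sum_ne_zero (mul_apply_ofList f g l ▸ hl)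
    rw [← List.take_append_drop i l, List.mem_append] at ha
    exact ha.elim (hf _ (left_ne_zero_of_mul hi) a) (hg _ (right_ne_zero_of_mul hi) a)

theorem magnusUnit_mem_units (x : X) : magnusUnit x ∈ (supportedOnPowers x).units := by
  refine (Submonoid.mem_units_iff _ _).2 ⟨?_, ?_⟩
  · rintro (_ | ⟨a, _ | ⟨b, t⟩⟩) hne c hc
    · simp at hc
    · rw [List.mem_singleton.1 hc]
      refine eq_of_Xvar_apply_of_ne_zero fun h => hne ?_
      rw [val_magnusUnit, add_apply, one_apply_ofList_of_ne_nil (List.cons_ne_nil a []), zero_add]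
      exact h
    · refine absurd ?_ hne
      rw [val_magnusUnit, add_apply, one_apply_ofList_of_ne_nil (List.cons_ne_nil a _),
        Xvar_apply_ofList_of_length_ne_one x (by simp), add_zero]
  · intro l hl a ha
    refine eq_of_Xvar_apply_of_ne_zero (neg_ne_zero.1 fun h => hl ?_)
    rw [val_inv_magnusUnit, oneAddXvarInv_apply_ofList]
    exact List.prod_eq_zero (List.mem_map.2 ⟨a, ha, h⟩)

theorem magnusUnit_zpow_apply_one (x : X) (n : ℤ) :
    ((magnusUnit x ^ n : (NCSeries X)ˣ) : NCSeries X) 1 = 1 := by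
  induction n using Int.induction_on with
  | zero => exact one_apply_one
  | succ n ih =>
    rw [zpow_add_one, Units.val_mul, mul_apply_one, ih, val_magnusUnit, add_apply, one_apply_one,
      Xvar_apply_one, add_zero, one_mul]
  | pred n ih =>
    rw [zpow_sub_one, Units.val_mul, mul_apply_one, ih, val_inv_magnusUnit,
      oneAddXvarInv_apply_one, one_mul]

theorem magnusUnit_zpow_apply_of_self (x : X) (n : ℤ) :
    ((magnusUnit x ^ n : (NCSeries X)ˣ) : NCSeries X) (FreeMonoid.of x) = n := by
  induction n using Int.induction_on with
  | zero => exact one_apply_of x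
  | succ n ih =>
    rw [zpow_add_one, Units.val_mul, mul_apply_of, ih, magnusUnit_zpow_apply_one, val_magnusUnit,
      add_apply, add_apply, one_apply_one, one_apply_of, Xvar_apply_one, Xvar_apply_of_self]
    push_cast
    ring
  | pred n ih =>
    rw [zpow_sub_one, Units.val_mul, mul_apply_of, ih, magnusUnit_zpow_apply_one,
      val_inv_magnusUnit, oneAddXvarInv_apply_one, oneAddXvarInv_apply_of_self]
    push_cast
    ring

theorem mul_apply_cons_of_isChain {x : X} {f : NCSeries X} (hf : f ∈ supportedOnPowers x)
    (g : NCSeries X) {a : X} {t : List X} (ht : (a :: t).IsChain (· ≠ ·)) :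
    (f * g) (ofList (a :: t)) =
      f 1 * g (ofList (a :: t)) + f (FreeMonoid.of a) * g (ofList t) := by
  rw [mul_apply_ofList, List.length_cons, Finset.sum_range_succ', Finset.sum_range_succ',
    Finset.sum_eq_zero, zero_add, add_comm]
  · rfl
  intro i hi
  obtain ⟨b, t, rfl⟩ := List.exists_cons_of_ne_nil (List.ne_nil_of_length_pos
    (Nat.zero_lt_of_lt (Finset.mem_range.1 hi)))
  have hab : a ≠ b := (List.isChain_cons_cons.1 ht).1
  by_contra h
  have hx := hf _ (left_ne_zero_of_mul h)
  exact hab ((hx a (by simp)).trans (hx b (by simp)).symm)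

theorem list_prod_map_apply_eq_zero {ι : Type*} (x : ι → X) (f : ι → NCSeries X) (l : List ι)
    (hf : ∀ i ∈ l, f i ∈ supportedOnPowers (x i)) {u : List X} (hu : u.IsChain (· ≠ ·))
    (hlen : l.length < u.length) : (l.map f).prod (ofList u) = 0 := by
  induction l generalizing u with
  | nil => exact one_apply_ofList_of_ne_nil (List.ne_nil_of_length_pos hlen)
  | cons i l ih =>
    obtain ⟨a, t, rfl⟩ := List.exists_cons_of_ne_nil (List.ne_nil_of_length_pos
      (Nat.zero_lt_of_lt hlen))
    have hf' := fun j hj => hf j (List.mem_cons_of_mem i hj)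
    simp only [List.length_cons] at hlen
    rw [List.map_cons, List.prod_cons, mul_apply_cons_of_isChain (hf i List.mem_cons_self) _ hu,
      ih hf' hu (by simp only [List.length_cons]; omega),
      ih hf' (List.isChain_cons.1 hu).2 (by omega), mul_zero, mul_zero, add_zero]

theorem list_prod_map_apply_map_of_isChain {ι : Type*} (x : ι → X) (f : ι → NCSeries X)
    (l : List ι) (hf : ∀ i ∈ l, f i ∈ supportedOnPowers (x i)) (hl : l.IsChain (x · ≠ x ·)) :
    (l.map f).prod (ofList (l.map x)) = (l.map fun i => f i (FreeMonoid.of (x i))).prod := by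
  induction l with
  | nil => exact one_apply_one
  | cons i l ih =>
    have hf' := fun j hj => hf j (List.mem_cons_of_mem i hj)
    have hu : (x i :: l.map x).IsChain (· ≠ ·) := by
      rw [← List.map_cons, List.isChain_map]; exact hl
    rw [List.map_cons, List.map_cons, List.prod_cons,
      mul_apply_cons_of_isChain (hf i List.mem_cons_self) _ hu,
      list_prod_map_apply_eq_zero x f l hf' hu (by simp), ih hf' hl.tail, mul_zero, zero_add,
      List.map_cons, List.prod_cons]

theorem freeGroup_lift_magnusUnit_apply (x : X) (g : FreeGroup Unit) :
    FreeGroup.lift (fun _ => magnusUnit x) g = magnusUnit x ^ FreeGroup.equivIntOfUnique g := by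
  conv_lhs => rw [← FreeGroup.equivIntOfUnique.symm_apply_apply g]
  simp [FreeGroup.equivIntOfUnique]

open Monoid

variable (X) in
noncomputable def magnusCoprod : CoprodI (fun _ : X => FreeGroup Unit) →* (NCSeries X)ˣ :=
  CoprodI.lift fun x => FreeGroup.lift fun _ => magnusUnit x

theorem magnusCoprod_word_prod (W : CoprodI.Word fun _ : X => FreeGroup Unit) :
    (magnusCoprod X W.prod : NCSeries X) =
      (W.toList.map fun p =>
        ((magnusUnit p.1 ^ FreeGroup.equivIntOfUnique p.2 : (NCSeries X)ˣ) : NCSeries X)).prod := by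
  rw [CoprodI.Word.prod, map_list_prod, ← Units.coeHom_apply, map_list_prod, List.map_map,
    List.map_map]
  simp [Function.comp_def, magnusCoprod, freeGroup_lift_magnusUnit_apply]

theorem magnusCoprod_word_prod_apply (W : CoprodI.Word fun _ : X => FreeGroup Unit) :
    (magnusCoprod X W.prod : NCSeries X) (ofList (W.toList.map Sigma.fst)) =
      (W.toList.map fun p => FreeGroup.equivIntOfUnique p.2).prod := by
  rw [magnusCoprod_word_prod, list_prod_map_apply_map_of_isChain _ _ _ _ W.chain_ne]
  · simp only [magnusUnit_zpow_apply_of_self]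
  · intro p _
    exact ((Submonoid.mem_units_iff _ _).1 (Subgroup.zpow_mem _ (magnusUnit_mem_units p.1) _)).1

theorem magnusCoprod_word_prod_ne_one {W : CoprodI.Word fun _ : X => FreeGroup Unit}
    (hW : W.toList ≠ []) : magnusCoprod X W.prod ≠ 1 := by
  intro h
  have hcoeff := magnusCoprod_word_prod_apply W
  rw [h, Units.val_one, one_apply_ofList_of_ne_nil (by simpa using hW)] at hcoeff
  refine List.prod_ne_zero ?_ hcoeff.symm
  simp only [List.mem_map, not_exists, not_and]
  exact fun p hp => FreeGroup.equivIntOfUnique_ne_zero (W.ne_one p hp)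

theorem magnusCoprod_injective : Function.Injective (magnusCoprod X) := by
  classical
  refine (injective_iff_map_eq_one _).2 fun w hw => ?_
  obtain ⟨W, rfl⟩ := CoprodI.Word.equiv.symm.surjective w
  by_contra hne
  refine magnusCoprod_word_prod_ne_one (fun h => hne ?_) hw
  simp [CoprodI.Word.equiv, CoprodI.Word.prod, h]

theorem freeGroup_lift_magnusUnit_injective :
    Function.Injective (FreeGroup.lift (magnusUnit (X := X))) := by
  have hfactor : FreeGroup.lift (magnusUnit (X := X)) =
      (magnusCoprod X).comp freeGroupEquivCoprodI.toMonoidHom := by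
    ext x
    simp [magnusCoprod]
  rw [hfactor, MonoidHom.coe_comp]
  exact magnusCoprod_injective.comp freeGroupEquivCoprodI.injective

end NCSeries

/-- The Magnus map `x ↦ 1 + X_x` from the free group on `X` into the group of units of
the ring of formal power series in non-commuting variables over `ℤ` is an injective
group homomorphism. -/
theorem magnus_map_injective (X : Type) :
    ∃ f : FreeGroup X →* (NCSeries X)ˣ,
      (∀ x : X, ((f (FreeGroup.of x) : (NCSeries X)ˣ) : NCSeries X) = 1 + NCSeries.Xvar x) ∧
      Function.Injective f :=
  ⟨FreeGroup.lift NCSeries.magnusUnit, fun x => by simp,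
    NCSeries.freeGroup_lift_magnusUnit_injective⟩
end
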